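/- (Theorem 1, PCA–IR relation.) Let X be a real n×N matrix (N ≥ 2) with X·Xᵀ invertible, and let M ∈ ℝ^N be nonzero with X·M ≠ 0. Let v = (X·Xᵀ)⁻¹·X·M be the regression vector and v* = v/‖v‖₂ the first Iterative Regression dimension. Let p ∈ ℝⁿ be a unit eigenvector of the sample covariance matrix Σ_X = (N−1)⁻¹·X·Xᵀ with eigenvalue λ > 0 (so that X·Xᵀ·p = (N−1)·λ·p). Then the sample correlation between the principal-component projection pᵀX and M satisfies r(pᵀX, M) = ⟨Xᵀ·p, M⟩ / (‖M‖₂ ‖Xᵀ·p‖₂) = α·√λ·⟨v*, p⟩, where α = ‖v‖₂·√(N−1)/‖M‖₂; equivalently, r(pᵀX, M) = (√(λ·(N−1))/‖M‖₂)·⟨v, p⟩. -/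

import Mathlib

open Matrix

/-!
Write `μ = (N - 1) λ`. Because `v` solves the normal equations `X Xᵀ v = X M` and `X Xᵀ` is
symmetric with `X Xᵀ p = μ p`, we get `⟨Xᵀp, M⟩ = ⟨p, X Xᵀ v⟩ = μ ⟨v, p⟩` and
`‖Xᵀp‖² = ⟨p, X Xᵀ p⟩ = μ`. Hence `r(pᵀX, M) = μ ⟨v, p⟩ / (‖M‖ √μ) = √μ ⟨v, p⟩ / ‖M‖`, and
`√μ = √(N - 1) √λ`, `⟨v, p⟩ = ‖v‖ ⟨v*, p⟩` turn this into the form with `α`.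
-/

variable {m k R : Type*} [Fintype m] [Fintype k]

namespace Matrix

lemma sum_sq_eq_dotProduct_self [Semiring R] (v : m → R) : ∑ i, v i ^ 2 = v ⬝ᵥ v := by
  simp only [dotProduct, sq]

lemma mulVec_nonsing_inv_mulVec [DecidableEq m] [CommRing R] {A : Matrix m m R} (hA : IsUnit A)
    (y : m → R) : A *ᵥ (A⁻¹ *ᵥ y) = y := by
  rw [mulVec_mulVec, mul_nonsing_inv _ ((isUnit_iff_isUnit_det A).mp hA), one_mulVec]

lemma transpose_mulVec_dotProduct [CommSemiring R] (X : Matrix m k R) (p : m → R) (w : k → R) :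
    (Xᵀ *ᵥ p) ⬝ᵥ w = p ⬝ᵥ (X *ᵥ w) := by
  rw [mulVec_transpose, dotProduct_mulVec]

lemma IsSymm.dotProduct_mulVec_of_mulVec_eq_smul [CommSemiring R] {C : Matrix m m R}
    (hC : C.IsSymm) {p : m → R} {μ : R} (hp : C *ᵥ p = μ • p) (w : m → R) :
    p ⬝ᵥ (C *ᵥ w) = μ * (p ⬝ᵥ w) := by
  rw [← transpose_mulVec_dotProduct, hC.eq, hp, smul_dotProduct, smul_eq_mul]

section Gram

variable [CommSemiring R] {X : Matrix m k R} {p : m → R} {μ : R}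

lemma transpose_mulVec_dotProduct_of_gram_eigen (hp : (X * Xᵀ) *ᵥ p = μ • p) {v : m → R}
    {w : k → R} (hv : (X * Xᵀ) *ᵥ v = X *ᵥ w) : (Xᵀ *ᵥ p) ⬝ᵥ w = μ * (v ⬝ᵥ p) := by
  rw [transpose_mulVec_dotProduct, ← hv,
    IsSymm.dotProduct_mulVec_of_mulVec_eq_smul (transpose_mul X Xᵀ) hp, dotProduct_comm]

lemma transpose_mulVec_dotProduct_self_of_gram_eigen (hp : (X * Xᵀ) *ᵥ p = μ • p) :
    (Xᵀ *ᵥ p) ⬝ᵥ (Xᵀ *ᵥ p) = μ * (p ⬝ᵥ p) :=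
  transpose_mulVec_dotProduct_of_gram_eigen hp (mulVec_mulVec p X Xᵀ).symm

end Gram

end Matrix

lemma mul_div_mul_sqrt (μ t s : ℝ) : μ * t / (s * √μ) = √μ / s * t := by
  calc μ * t / (s * √μ) = μ / √μ / s * t := by ring
    _ = √μ / s * t := by rw [Real.div_sqrt]

lemma sqrt_sum_sq_mul_inv_smul_dotProduct (v w : m → ℝ) :
    √(∑ i, v i ^ 2) * ((√(∑ i, v i ^ 2))⁻¹ • v) ⬝ᵥ w = v ⬝ᵥ w := by
  rw [smul_dotProduct, smul_eq_mul]
  rcases eq_or_ne v 0 with rfl | hv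
  · simp
  · refine mul_inv_cancel_left₀ ((Real.sqrt_ne_zero (by positivity)).2 ?_) _
    rwa [sum_sq_eq_dotProduct_self, Ne, dotProduct_self_eq_zero]

lemma corr_transpose_mulVec_of_gram_eigen {X : Matrix m k ℝ} {p v : m → ℝ} {M : k → ℝ} {μ : ℝ}
    (hp : (X * Xᵀ) *ᵥ p = μ • p) (hunit : ∑ i, p i ^ 2 = 1) (hv : (X * Xᵀ) *ᵥ v = X *ᵥ M) :
    (Xᵀ *ᵥ p) ⬝ᵥ M / (√(∑ j, M j ^ 2) * √(∑ j, (Xᵀ *ᵥ p) j ^ 2))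
      = √μ / √(∑ j, M j ^ 2) * (v ⬝ᵥ p) := by
  have hsq : ∑ j, (Xᵀ *ᵥ p) j ^ 2 = μ := by
    rw [sum_sq_eq_dotProduct_self, transpose_mulVec_dotProduct_self_of_gram_eigen hp,
      ← sum_sq_eq_dotProduct_self, hunit, mul_one]
  rw [transpose_mulVec_dotProduct_of_gram_eigen hp hv, hsq, mul_div_mul_sqrt]

theorem pca_ir_relation_general {n N : ℕ}
    (X : Matrix (Fin n) (Fin N) ℝ) (M : Fin N → ℝ)
    (hX : IsUnit (X * Xᵀ))
    (v : Fin n → ℝ) (hv : v = (X * Xᵀ)⁻¹ *ᵥ (X *ᵥ M))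
    (vstar : Fin n → ℝ) (hvstar : vstar = (Real.sqrt (∑ i, (v i) ^ 2))⁻¹ • v)
    (p : Fin n → ℝ) (hp : ∑ i, (p i) ^ 2 = 1)
    (lam : ℝ) (hlam : 0 < lam)
    (heig : (X * Xᵀ) *ᵥ p = (((N : ℝ) - 1) * lam) • p)
    (α : ℝ)
    (hα : α = Real.sqrt (∑ i, (v i) ^ 2) * Real.sqrt ((N : ℝ) - 1)
            / Real.sqrt (∑ j, (M j) ^ 2)) :
    (Xᵀ *ᵥ p) ⬝ᵥ M /
        (Real.sqrt (∑ j, (M j) ^ 2) * Real.sqrt (∑ j, ((Xᵀ *ᵥ p) j) ^ 2))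
      = α * Real.sqrt lam * (vstar ⬝ᵥ p) ∧
    (Xᵀ *ᵥ p) ⬝ᵥ M /
        (Real.sqrt (∑ j, (M j) ^ 2) * Real.sqrt (∑ j, ((Xᵀ *ᵥ p) j) ^ 2))
      = (Real.sqrt (lam * ((N : ℝ) - 1)) / Real.sqrt (∑ j, (M j) ^ 2))
          * (v ⬝ᵥ p) := by
  have hnormal : (X * Xᵀ) *ᵥ v = X *ᵥ M := hv ▸ mulVec_nonsing_inv_mulVec hX _
  have hcorr := corr_transpose_mulVec_of_gram_eigen heig hp hnormal
  refine ⟨?_, by rw [hcorr, mul_comm lam]⟩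
  rw [hcorr, hα, hvstar, Real.sqrt_mul' _ hlam.le, ← sqrt_sum_sq_mul_inv_smul_dotProduct v p]
  ring

/-- **Theorem 1 (PCA–IR relation).**
Let `X ∈ ℝ^{n×N}` (`N ≥ 2`) have `X Xᵀ` invertible, let `M ∈ ℝ^N` be nonzero with
`X M ≠ 0`, let `v = (X Xᵀ)⁻¹ X M` be the regression vector and `v* = v/‖v‖₂` the
first IR dimension. If `p` is a unit eigenvector of the sample covariance
`Σ_X = (N−1)⁻¹ X Xᵀ` with eigenvalue `λ > 0` (i.e. `X Xᵀ p = (N−1) λ p`), then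
`r(pᵀX, M) = ⟨Xᵀp, M⟩/(‖M‖₂ ‖Xᵀp‖₂) = α √λ ⟨v*, p⟩` with
`α = ‖v‖₂ √(N−1)/‖M‖₂`; equivalently `r(pᵀX, M) = (√(λ(N−1))/‖M‖₂) ⟨v, p⟩`. -/
theorem pca_ir_relation {n N : ℕ} (hN : 2 ≤ N)
    (X : Matrix (Fin n) (Fin N) ℝ) (M : Fin N → ℝ)
    (hX : IsUnit (X * Xᵀ)) (hM : M ≠ 0) (hXM : X *ᵥ M ≠ 0)
    (v : Fin n → ℝ) (hv : v = (X * Xᵀ)⁻¹ *ᵥ (X *ᵥ M))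
    (vstar : Fin n → ℝ) (hvstar : vstar = (Real.sqrt (∑ i, (v i) ^ 2))⁻¹ • v)
    (p : Fin n → ℝ) (hp : ∑ i, (p i) ^ 2 = 1)
    (lam : ℝ) (hlam : 0 < lam)
    (heig : (X * Xᵀ) *ᵥ p = (((N : ℝ) - 1) * lam) • p)
    (α : ℝ)
    (hα : α = Real.sqrt (∑ i, (v i) ^ 2) * Real.sqrt ((N : ℝ) - 1)
            / Real.sqrt (∑ j, (M j) ^ 2)) :
    (Xᵀ *ᵥ p) ⬝ᵥ M /
        (Real.sqrt (∑ j, (M j) ^ 2) * Real.sqrt (∑ j, ((Xᵀ *ᵥ p) j) ^ 2))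
      = α * Real.sqrt lam * (vstar ⬝ᵥ p) ∧
    (Xᵀ *ᵥ p) ⬝ᵥ M /
        (Real.sqrt (∑ j, (M j) ^ 2) * Real.sqrt (∑ j, ((Xᵀ *ᵥ p) j) ^ 2))
      = (Real.sqrt (lam * ((N : ℝ) - 1)) / Real.sqrt (∑ j, (M j) ^ 2))
          * (v ⬝ᵥ p) :=
  pca_ir_relation_general X M hX v hv vstar hvstar p hp lam hlam heig α hα
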